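/- A De Morgan function lies in the clone DMA = ⟨∧, ∨, t, f, −⟩ if and only if it is harmonious and persistent. -/
import Mathlib


set_option autoImplicit false

/-- The four truth values of the Belnap–Dunn logic. -/
inductive DM4 : Type
  | t
  | f
  | n
  | b
deriving DecidableEq

namespace DM4

/-- De Morgan negation. -/
def neg : DM4 → DM4
  | t => f
  | f => t
  | n => n
  | b => b

/-- Conflation. -/
def conf : DM4 → DM4
  | t => t
  | f => f
  | n => b
  | b => n

/-- Meet in the truth order. -/
def meet : DM4 → DM4 → DM4
  | f, _ => f
  | _, f => f
  | t, y => y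
  | x, t => x
  | n, n => n
  | b, b => b
  | n, b => f
  | b, n => f

/-- Join in the truth order. -/
def join : DM4 → DM4 → DM4
  | t, _ => t
  | _, t => t
  | f, y => y
  | x, f => x
  | n, n => n
  | b, b => b
  | n, b => t
  | b, n => t

/-- Meet in the information order (⊗). -/
def imeet : DM4 → DM4 → DM4
  | n, _ => n
  | _, n => n
  | b, y => y
  | x, b => x
  | t, t => t
  | f, f => f
  | t, f => n
  | f, t => n

/-- Join in the information order (⊕). -/
def ijoin : DM4 → DM4 → DM4
  | b, _ => b
  | _, b => b
  | n, y => y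
  | x, n => x
  | t, t => t
  | f, f => f
  | t, f => b
  | f, t => b

/-- The truth order: least element `f`, greatest element `t`, with `n`, `b` incomparable. -/
def tle (x y : DM4) : Prop := x = y ∨ x = f ∨ y = t

/-- The information order: least element `n`, greatest element `b`, with `t`, `f` incomparable. -/
def ile (x y : DM4) : Prop := x = y ∨ x = n ∨ y = b

/-- □: maps t to t and everything else to f. -/
def box : DM4 → DM4
  | t => t
  | _ => f

/-- ◇: maps f to f and everything else to t. -/
def diamond : DM4 → DM4
  | f => f
  | _ => t

/-- Δ: maps t, b to t and n, f to f. -/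
def delta : DM4 → DM4
  | t => t
  | b => t
  | _ => f

/-- ∇: maps t, n to t and b, f to f. -/
def nabla : DM4 → DM4
  | t => t
  | n => t
  | _ => f

/-- id_{b↦n}: maps b to n and fixes t, f, n. -/
def idbn : DM4 → DM4
  | b => n
  | x => x

/-- id_{n↦b}: maps n to b and fixes t, f, b. -/
def idnb : DM4 → DM4
  | n => b
  | x => x

/-- id_{n↦t}: maps n to t and fixes t, f, b. -/
def idnt : DM4 → DM4
  | n => t
  | x => x

/-- id_{b↦t}: maps b to t and fixes t, f, n. -/
def idbt : DM4 → DM4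
  | b => t
  | x => x

/-- t_{n↦n}: maps n to n and everything else to t. -/
def tnn : DM4 → DM4
  | n => n
  | _ => t

/-- t_{b↦b}: maps b to b and everything else to t. -/
def tbb : DM4 → DM4
  | b => b
  | _ => t

/-- The binary function pbp²₁. -/
def pbp1 : DM4 → DM4 → DM4
  | t, t => t | t, f => f | t, n => f | t, b => b
  | f, t => t | f, f => f | f, n => f | f, b => b
  | n, t => t | n, f => f | n, n => n | n, b => b
  | b, t => b | b, f => f | b, n => f | b, b => b

/-- The binary function pbp²₂. -/
def pbp2 : DM4 → DM4 → DM4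
  | t, t => t | t, f => f | t, n => n | t, b => f
  | f, t => t | f, f => f | f, n => n | f, b => f
  | n, t => n | n, f => f | n, n => n | n, b => f
  | b, t => t | b, f => f | b, n => n | b, b => b

/-- The binary function mnh²₁. -/
def mnh1 : DM4 → DM4 → DM4
  | t, t => f | t, f => f | t, n => n | t, b => b
  | f, t => f | f, f => f | f, n => n | f, b => b
  | n, t => f | n, f => f | n, n => n | n, b => f
  | b, t => f | b, f => f | b, n => n | b, b => b

/-- The binary function mnh²₂. -/
def mnh2 : DM4 → DM4 → DM4
  | t, t => f | t, f => f | t, n => n | t, b => b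
  | f, t => f | f, f => f | f, n => n | f, b => b
  | n, t => f | n, f => f | n, n => n | n, b => b
  | b, t => f | b, f => f | b, n => f | b, b => b

/-- The binary function mhnp². -/
def mhnp2 : DM4 → DM4 → DM4
  | t, _ => t
  | f, _ => t
  | n, b => f
  | n, _ => n
  | b, n => f
  | b, _ => b

/-- The binary function mnp²₁. -/
def mnp1 : DM4 → DM4 → DM4
  | t, b => b
  | t, _ => t
  | f, b => b
  | f, _ => t
  | n, b => f
  | n, _ => n
  | b, n => f
  | b, _ => b

/-- The binary function mnp²₂. -/
def mnp2 : DM4 → DM4 → DM4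
  | t, _ => t
  | f, _ => t
  | n, _ => n
  | b, n => f
  | b, _ => b

/-- The binary function mnp²₃. -/
def mnp3 : DM4 → DM4 → DM4
  | t, n => n
  | t, _ => t
  | f, n => n
  | f, _ => t
  | n, b => f
  | n, _ => n
  | b, n => f
  | b, _ => b

/-- The binary function mnp²₄. -/
def mnp4 : DM4 → DM4 → DM4
  | t, _ => t
  | f, _ => t
  | n, b => f
  | n, _ => n
  | b, _ => b

/-- The ternary function mhnp³. -/
def mhnp3 : DM4 → DM4 → DM4 → DM4
  | _, t, _ => f
  | _, f, _ => f
  | t, n, _ => n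
  | f, n, _ => f
  | b, n, _ => f
  | n, n, b => f
  | n, n, _ => n
  | t, b, _ => b
  | f, b, _ => f
  | n, b, _ => f
  | b, b, n => f
  | b, b, _ => b

/-- The set of designated values. -/
def Des : Set DM4 := {t, b}

/-- Designatedness as a Boolean predicate. -/
def des : DM4 → Bool
  | t => true
  | b => true
  | _ => false

/-- The protoimplication →_{t-max}. -/
def tmax (x y : DM4) : DM4 :=
  match des x, des y with
  | true, false => n
  | _, _ => t

/-- The protoimplication →_{i-max}. -/
def imax (x y : DM4) : DM4 :=
  match des x, des y with
  | true, false => f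
  | _, _ => b

/-- The protoimplication ↔_{t-min}. -/
def tmin (x y : DM4) : DM4 := if x = y then b else f

/-- The protoimplication ↔_{i-min}. -/
def imin (x y : DM4) : DM4 := if x = y then t else n

/-- A binary operation is a protoimplication if it satisfies Reflexivity and Modus Ponens
with respect to the designated set {t, b}. -/
def IsProtoimplication (r : DM4 → DM4 → DM4) : Prop :=
  (∀ a : DM4, r a a ∈ Des) ∧ ∀ a c : DM4, a ∈ Des → r a c ∈ Des → c ∈ Des

/-- `DMFun k` is the type of De Morgan functions of arity `k + 1` (arities are positive). -/
abbrev DMFun (k : ℕ) : Type := (Fin (k + 1) → DM4) → DM4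

/-- Membership in the clone generated by the family of operations `S`
(`S k` is the set of generators of arity `k + 1`). -/
inductive InClone (S : ∀ k : ℕ, Set (DMFun k)) : ∀ k : ℕ, DMFun k → Prop
  | base {k : ℕ} {g : DMFun k} : g ∈ S k → InClone S k g
  | proj {k : ℕ} (i : Fin (k + 1)) : InClone S k (fun x => x i)
  | comp {k m : ℕ} {g : DMFun m} {h : Fin (m + 1) → DMFun k} :
      InClone S m g → (∀ i, InClone S k (h i)) →
      InClone S k (fun x => g (fun i => h i x))

/-- A family of sets of De Morgan functions is a clone if it contains all projections
and is closed under composition. -/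
structure IsClone (C : ∀ k : ℕ, Set (DMFun k)) : Prop where
  proj : ∀ (k : ℕ) (i : Fin (k + 1)), (fun x => x i) ∈ C k
  comp : ∀ (k m : ℕ) (g : DMFun m) (h : Fin (m + 1) → DMFun k),
      g ∈ C m → (∀ i, h i ∈ C k) → (fun x => g (fun i => h i x)) ∈ C k

/-- The generating family consisting of a single unary operation. -/
def op1 (g : DM4 → DM4) : ∀ k : ℕ, Set (DMFun k)
  | 0 => {fun x => g (x 0)}
  | _ + 1 => ∅

/-- The generating family consisting of a single binary operation. -/
def op2 (g : DM4 → DM4 → DM4) : ∀ k : ℕ, Set (DMFun k)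
  | 1 => {fun x => g (x 0) (x 1)}
  | _ => ∅

/-- The generating family consisting of a single ternary operation. -/
def op3 (g : DM4 → DM4 → DM4 → DM4) : ∀ k : ℕ, Set (DMFun k)
  | 2 => {fun x => g (x 0) (x 1) (x 2)}
  | _ => ∅

/-- Union of two families of operations. -/
def funion (S T : ∀ k : ℕ, Set (DMFun k)) : ∀ k : ℕ, Set (DMFun k) := fun k => S k ∪ T k

infixr:65 " ⊹ " => funion

/-- The generators of DLat: ∧, ∨, t, f (constants as unary constant functions). -/
def DLatGen : ∀ k : ℕ, Set (DMFun k) :=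
  op2 meet ⊹ op2 join ⊹ op1 (fun _ => t) ⊹ op1 (fun _ => f)

/-- The generators of DMA: ∧, ∨, t, f, −. -/
def DMAGen : ∀ k : ℕ, Set (DMFun k) := DLatGen ⊹ op1 neg

/-- The generators of BiLat: ∧, ∨, t, f, ⊗, ⊕, n, b. -/
def BiLatGen : ∀ k : ℕ, Set (DMFun k) :=
  DLatGen ⊹ op2 imeet ⊹ op2 ijoin ⊹ op1 (fun _ => n) ⊹ op1 (fun _ => b)

/-- A De Morgan function is harmonious if it commutes with conflation. -/
def Harmonious {k : ℕ} (g : DMFun k) : Prop :=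
  ∀ x : Fin (k + 1) → DM4, g (fun i => conf (x i)) = conf (g x)

/-- A De Morgan function is positive if it is monotone in the componentwise truth order. -/
def Positive {k : ℕ} (g : DMFun k) : Prop :=
  ∀ x y : Fin (k + 1) → DM4, (∀ i, tle (x i) (y i)) → tle (g x) (g y)

/-- A De Morgan function is persistent if it is monotone in the componentwise
information order. -/
def Persistent {k : ℕ} (g : DMFun k) : Prop :=
  ∀ x y : Fin (k + 1) → DM4, (∀ i, ile (x i) (y i)) → ile (g x) (g y)

/-- A De Morgan function preserves a subset X of DM4 if it maps tuples from X into X. -/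
def Preserves {k : ℕ} (g : DMFun k) (X : Set DM4) : Prop :=
  ∀ x : Fin (k + 1) → DM4, (∀ i, x i ∈ X) → g x ∈ X

def B2 : Set DM4 := {t, f}
def K3 : Set DM4 := {t, n, f}
def P3 : Set DM4 := {t, b, f}

/-- A unary operation as a De Morgan function. -/
def toF1 (g : DM4 → DM4) : DMFun 0 := fun x => g (x 0)

/-- A binary operation as a De Morgan function. -/
def toF2 (g : DM4 → DM4 → DM4) : DMFun 1 := fun x => g (x 0) (x 1)

/-- A ternary operation as a De Morgan function. -/
def toF3 (g : DM4 → DM4 → DM4 → DM4) : DMFun 2 := fun x => g (x 0) (x 1) (x 2)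

/-- The clone generated by a family of operations, as a family of sets. -/
def CloneOf (S : ∀ k : ℕ, Set (DMFun k)) : ∀ k : ℕ, Set (DMFun k) :=
  fun k => {g | InClone S k g}

/-- Inclusion of families of operations. -/
def CloneLE (C D : ∀ k : ℕ, Set (DMFun k)) : Prop := ∀ k : ℕ, C k ⊆ D k


/-! ### Auxiliary material for the proof -/

instance : Fintype DM4 :=
  ⟨{t, f, n, b}, fun x => by cases x <;> simp⟩

instance (x y : DM4) : Decidable (ile x y) :=
  inferInstanceAs (Decidable (_ ∨ _ ∨ _))

lemma conf_meet' : ∀ a b, meet (conf a) (conf b) = conf (meet a b) := by decide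
lemma conf_join' : ∀ a b, join (conf a) (conf b) = conf (join a b) := by decide
lemma conf_neg' : ∀ a, neg (conf a) = conf (neg a) := by decide
lemma ile_meet' : ∀ a b a' b', ile a a' → ile b b' → ile (meet a b) (meet a' b') := by decide
lemma ile_join' : ∀ a b a' b', ile a a' → ile b b' → ile (join a b) (join a' b') := by decide
lemma ile_neg' : ∀ a b, ile a b → ile (neg a) (neg b) := by decide
lemma ile_refl' : ∀ a, ile a a := by decide
lemma des_mono' : ∀ a b, ile a b → des a = true → des b = true := by decide
lemma des_join' : ∀ a b, des (join a b) = (des a || des b) := by decide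
lemma des_meet' : ∀ a b, des (meet a b) = (des a && des b) := by decide
lemma eq_of_des' : ∀ y z : DM4, des y = des z → des (conf y) = des (conf z) → y = z := by decide

/-- literal used in the normal form -/
def lit : DM4 → DM4 → DM4
  | t, x => x
  | f, x => neg x
  | b, x => meet x (neg x)
  | n, _ => t

lemma des_lit' : ∀ c x, (des (lit c x) = true ↔ ile c x) := by decide

lemma inclone_comp1 {S : ∀ k : ℕ, Set (DMFun k)} {k : ℕ} {op : DM4 → DM4}
    (hop : InClone S 0 (fun x => op (x 0))) {p : DMFun k} (hp : InClone S k p) :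
    InClone S k (fun x => op (p x)) :=
  InClone.comp (h := fun _ => p) hop (fun _ => hp)

lemma inclone_comp2 {S : ∀ k : ℕ, Set (DMFun k)} {k : ℕ} {op : DM4 → DM4 → DM4}
    (hop : InClone S 1 (fun x => op (x 0) (x 1))) {p q : DMFun k}
    (hp : InClone S k p) (hq : InClone S k q) :
    InClone S k (fun x => op (p x) (q x)) := by
  have h := InClone.comp (h := fun i => if i = 0 then p else q) hop
    (fun i => by by_cases hi : i = 0 <;> simp [hi, hp, hq])
  simpa using h

lemma meet_mem : InClone DMAGen 1 (fun x => meet (x 0) (x 1)) :=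
  InClone.base (Or.inl (Or.inl rfl))

lemma join_mem : InClone DMAGen 1 (fun x => join (x 0) (x 1)) :=
  InClone.base (Or.inl (Or.inr (Or.inl rfl)))

lemma neg_mem : InClone DMAGen 0 (fun x => neg (x 0)) :=
  InClone.base (Or.inr rfl)

lemma constt_mem0 : InClone DMAGen 0 (fun _ => t) :=
  InClone.base (Or.inl (Or.inr (Or.inr (Or.inl rfl))))

lemma constf_mem0 : InClone DMAGen 0 (fun _ => f) :=
  InClone.base (Or.inl (Or.inr (Or.inr (Or.inr rfl))))

lemma constt_mem {k : ℕ} : InClone DMAGen k (fun _ => t) :=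
  InClone.comp (h := fun _ => fun x => x 0) constt_mem0 (fun _ => InClone.proj 0)

lemma constf_mem {k : ℕ} : InClone DMAGen k (fun _ => f) :=
  InClone.comp (h := fun _ => fun x => x 0) constf_mem0 (fun _ => InClone.proj 0)

lemma litterm_mem {k : ℕ} (v : DM4) (i : Fin (k + 1)) :
    InClone DMAGen k (fun x => lit v (x i)) := by
  cases v
  · exact InClone.proj i
  · exact inclone_comp1 neg_mem (InClone.proj i)
  · exact constt_mem
  · exact inclone_comp2 meet_mem (InClone.proj i) (inclone_comp1 neg_mem (InClone.proj i))

def mtermAux {k : ℕ} (c x : Fin (k + 1) → DM4) : List (Fin (k + 1)) → DM4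
  | [] => t
  | i :: l => meet (lit (c i) (x i)) (mtermAux c x l)

def mterm {k : ℕ} (c : Fin (k + 1) → DM4) : DMFun k :=
  fun x => mtermAux c x (List.finRange (k + 1))

def jterm {k : ℕ} (x : Fin (k + 1) → DM4) : List (Fin (k + 1) → DM4) → DM4
  | [] => f
  | c :: L => join (mterm c x) (jterm x L)

lemma mtermAux_mem {k : ℕ} (c : Fin (k + 1) → DM4) (l : List (Fin (k + 1))) :
    InClone DMAGen k (fun x => mtermAux c x l) := by
  induction l with
  | nil => exact constt_mem
  | cons i l ih => exact inclone_comp2 meet_mem (litterm_mem (c i) i) ih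

lemma mterm_mem {k : ℕ} (c : Fin (k + 1) → DM4) : InClone DMAGen k (mterm c) :=
  mtermAux_mem c _

lemma jterm_mem {k : ℕ} (L : List (Fin (k + 1) → DM4)) :
    InClone DMAGen k (fun x => jterm x L) := by
  induction L with
  | nil => exact constf_mem
  | cons c L ih => exact inclone_comp2 join_mem (mterm_mem c) ih

lemma des_mtermAux {k : ℕ} (c x : Fin (k + 1) → DM4) (l : List (Fin (k + 1))) :
    des (mtermAux c x l) = true ↔ ∀ i ∈ l, ile (c i) (x i) := by
  induction l with
  | nil => simp [mtermAux, des]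
  | cons i l ih => simp [mtermAux, des_meet', Bool.and_eq_true, ih, des_lit']

lemma des_mterm {k : ℕ} (c x : Fin (k + 1) → DM4) :
    des (mterm c x) = true ↔ ∀ i, ile (c i) (x i) := by
  simp [mterm, des_mtermAux, List.mem_finRange]

lemma des_jterm {k : ℕ} (x : Fin (k + 1) → DM4) (L : List (Fin (k + 1) → DM4)) :
    des (jterm x L) = true ↔ ∃ c ∈ L, des (mterm c x) = true := by
  induction L with
  | nil => simp [jterm, des]
  | cons c L ih => simp [jterm, des_join', Bool.or_eq_true, ih]

lemma gen_ok : ∀ (k : ℕ) (g : DMFun k), g ∈ DMAGen k → Harmonious g ∧ Persistent g := by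
  intro k g hg
  match k with
  | 0 =>
    have hg' : g = (fun _ => t) ∨ g = (fun _ => f) ∨ g = (fun x => neg (x 0)) := by
      rcases hg with ((h | h | h | h) | h)
      · exact absurd h (Set.notMem_empty _)
      · exact absurd h (Set.notMem_empty _)
      · exact Or.inl h
      · exact Or.inr (Or.inl h)
      · exact Or.inr (Or.inr h)
    rcases hg' with h | h | h <;> subst h
    · exact ⟨fun x => rfl, fun x y _ => Or.inl rfl⟩
    · exact ⟨fun x => rfl, fun x y _ => Or.inl rfl⟩
    · exact ⟨fun x => conf_neg' (x 0), fun x y h => ile_neg' _ _ (h 0)⟩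
  | 1 =>
    have hg' : g = (fun x => meet (x 0) (x 1)) ∨ g = (fun x => join (x 0) (x 1)) := by
      rcases hg with ((h | h | h | h) | h)
      · exact Or.inl h
      · exact Or.inr h
      · exact absurd h (Set.notMem_empty _)
      · exact absurd h (Set.notMem_empty _)
      · exact absurd h (Set.notMem_empty _)
    rcases hg' with h | h <;> subst h
    · exact ⟨fun x => conf_meet' (x 0) (x 1), fun x y h => ile_meet' _ _ _ _ (h 0) (h 1)⟩
    · exact ⟨fun x => conf_join' (x 0) (x 1), fun x y h => ile_join' _ _ _ _ (h 0) (h 1)⟩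
  | (m + 2) =>
    rcases hg with ((h | h | h | h) | h) <;> exact absurd h (Set.notMem_empty _)

lemma harm_pers_of_inclone {k : ℕ} {g : DMFun k} (hc : InClone DMAGen k g) :
    Harmonious g ∧ Persistent g := by
  induction hc with
  | base hg => exact gen_ok _ _ hg
  | proj i => exact ⟨fun x => rfl, fun x y h => h i⟩
  | @comp k m g h hg hh ihg ihh =>
    constructor
    · intro x
      show g (fun i => h i (fun j => conf (x j))) = conf (g (fun i => h i x))
      have e : (fun i => h i (fun j => conf (x j))) = fun i => conf (h i x) :=
        funext fun i => (ihh i).1 x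
      rw [e]
      exact ihg.1 (fun i => h i x)
    · intro x y hxy
      exact ihg.2 _ _ (fun i => (ihh i).2 x y hxy)

/-- A De Morgan function lies in DMA = ⟨∧, ∨, t, f, −⟩
iff it is harmonious and persistent. -/
theorem dma_characterization (k : ℕ) (g : DMFun k) :
    InClone DMAGen k g ↔ Harmonious g ∧ Persistent g := by
  constructor
  · exact harm_pers_of_inclone
  · rintro ⟨hH, hP⟩
    classical
    set L : List (Fin (k + 1) → DM4) :=
      ((Finset.univ : Finset (Fin (k + 1) → DM4)).filter (fun c => des (g c) = true)).toList
      with hLdef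
    have hmemL : ∀ c, c ∈ L ↔ des (g c) = true := by
      intro c; simp [hLdef, Finset.mem_toList, Finset.mem_filter]
    have hT : InClone DMAGen k (fun x => jterm x L) := jterm_mem L
    have hdes : ∀ x, des (jterm x L) = des (g x) := by
      intro x
      by_cases hgx : des (g x) = true
      · rw [hgx]
        exact (des_jterm x L).mpr ⟨x, (hmemL x).mpr hgx, (des_mterm x x).mpr (fun i => ile_refl' _)⟩
      · rw [Bool.not_eq_true] at hgx
        rw [hgx]
        cases hj : des (jterm x L) with
        | false => rfl
        | true =>
          obtain ⟨c, hcL, hcm⟩ := (des_jterm x L).mp hj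
          have h1 : des (g c) = true := (hmemL c).mp hcL
          have h2 : ile (g c) (g x) := hP c x ((des_mterm c x).mp hcm)
          have h3 := des_mono' _ _ h2 h1
          rw [hgx] at h3
          exact absurd h3 (by decide)
    have hTh : Harmonious (fun x => jterm x L) := (harm_pers_of_inclone hT).1
    have hgT : g = fun x => jterm x L := by
      funext x
      show g x = jterm x L
      apply eq_of_des'
      · exact (hdes x).symm
      · have h1 := hH x
        have h2 := hTh x
        simp only at h1 h2
        rw [← h1, ← h2]
        exact (hdes _).symm
    rw [hgT]
    exact hT


end DM4
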